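/- arXiv:2205.12116 — 2 statements merged into one kernel-verified Lean document; each statement's English description precedes it below -/
import Mathlib

section
/- Let A ⟶f B ⟶g C ⟶h A⟦1⟧ be a distinguished triangle in C. Then f factors through an object of N if and only if g is a monomorphism modulo N, i.e., for every morphism x: X ⟶ B, if g ∘ x factors through an object of N then x factors through an object of N. -/
open CategoryTheory CategoryTheory.Limits CategoryTheory.Pretriangulated

universe v u v₂ u₂

variable {C : Type u} [Category.{v} C] [Preadditive C] [HasZeroObject C]
  [HasShift C ℤ] [∀ n : ℤ, (shiftFunctor C n).Additive] [Pretriangulated C]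

/-- `f : X ⟶ Y` factors through an object of `N`. -/
def FactorsThru (N : Set C) {X Y : C} (f : X ⟶ Y) : Prop :=
  ∃ (Z : C) (_ : Z ∈ N) (u : X ⟶ Z) (v : Z ⟶ Y), f = u ≫ v

/-- The morphism `X⟦-1⟧ ⟶ A` obtained from `h : X ⟶ A⟦1⟧` by shifting by `-1` and
composing with the canonical isomorphism `A⟦1⟧⟦-1⟧ ≅ A`. -/
noncomputable def descShift {X A : C} (h : X ⟶ A⟦(1:ℤ)⟧) : X⟦(-1:ℤ)⟧ ⟶ A :=
  h⟦(-1:ℤ)⟧' ≫ (shiftEquiv C (1:ℤ)).unitIso.inv.app A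

/-- The class `S_N` of morphisms fitting in a distinguished triangle whose two other
maps factor through `N`. -/
def SN (N : Set C) {B C₀ : C} (g : B ⟶ C₀) : Prop :=
  ∃ (A : C) (f : A ⟶ B) (h : C₀ ⟶ A⟦(1:ℤ)⟧),
    (Triangle.mk f g h ∈ distTriang C) ∧ FactorsThru N f ∧ FactorsThru N h

/-- The class `L`. -/
def ClassL (N : Set C) {A B : C} (f : A ⟶ B) : Prop :=
  ∃ (N₀ : C) (_ : N₀ ∈ N) (g : B ⟶ N₀) (h : N₀ ⟶ A⟦(1:ℤ)⟧),
    (Triangle.mk f g h ∈ distTriang C) ∧ FactorsThru N (descShift h)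

/-- The class `R`. -/
def ClassR (N : Set C) {B C₀ : C} (g : B ⟶ C₀) : Prop :=
  ∃ (N₀ : C) (_ : N₀ ∈ N) (f : N₀ ⟶ B) (h : C₀ ⟶ N₀⟦(1:ℤ)⟧),
    (Triangle.mk f g h ∈ distTriang C) ∧ FactorsThru N h

/-- Condition (Lex) on a morphism `h : C₀ ⟶ A⟦1⟧`. -/
def LexCond (N : Set C) {C₀ A : C} (h : C₀ ⟶ A⟦(1:ℤ)⟧) : Prop :=
  ∀ (N₀ : C), N₀ ∈ N → ∀ (x : N₀ ⟶ C₀), FactorsThru N (descShift (x ≫ h))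

/-- Condition (Rex) on a morphism `h : C₀ ⟶ A⟦1⟧`. -/
def RexCond (N : Set C) {C₀ A : C} (h : C₀ ⟶ A⟦(1:ℤ)⟧) : Prop :=
  ∀ (N₀ : C), N₀ ∈ N → ∀ (y : A ⟶ N₀),
    ∃ (M : C) (_ : M ∈ N) (u : C₀⟦(-1:ℤ)⟧ ⟶ M⟦(-1:ℤ)⟧) (v : M⟦(-1:ℤ)⟧ ⟶ N₀),
      descShift h ≫ y = u ≫ v

/-- `S_N` as a morphism property. -/
def SNProp (N : Set C) : MorphismProperty C := fun _ _ g => SN N g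



namespace FactorsThru

section Category

variable {C : Type*} [Category C] {N : Set C}

open ZeroObject in
lemma zero [HasZeroMorphisms C] [HasZeroObject C] (hN0 : ∀ X : C, IsZero X → X ∈ N)
    (X Y : C) : FactorsThru N (0 : X ⟶ Y) :=
  ⟨0, hN0 _ (isZero_zero C), 0, 0, by simp⟩

lemma comp {X Y Z : C} {f : X ⟶ Y} (hf : FactorsThru N f) (g : Y ⟶ Z) :
    FactorsThru N (f ≫ g) := by
  obtain ⟨M, hM, u, v, rfl⟩ := hf
  exact ⟨M, hM, u, v ≫ g, by simp⟩

end Category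

variable {N : Set C}

lemma add
    (hNext : ∀ T ∈ distTriang C, T.obj₁ ∈ N → T.obj₃ ∈ N → T.obj₂ ∈ N)
    {X Y : C} {f g : X ⟶ Y} (hf : FactorsThru N f) (hg : FactorsThru N g) :
    FactorsThru N (f + g) := by
  obtain ⟨M, hM, u, v, rfl⟩ := hf
  obtain ⟨M', hM', u', v', rfl⟩ := hg
  exact ⟨M ⊞ M', hNext _ (binaryBiproductTriangle_distinguished M M') hM hM',
    biprod.lift u u', biprod.desc v v', by simp⟩

end FactorsThru

def IsMonoModulo {C : Type*} [Category C] (N : Set C) {B C₀ : C} (g : B ⟶ C₀) : Prop :=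
  ∀ ⦃X : C⦄ (x : X ⟶ B), FactorsThru N (x ≫ g) → FactorsThru N x

lemma IsMonoModulo.of_comp {C : Type*} [Category C] {N : Set C} {B C₀ C₁ : C} {g : B ⟶ C₀}
    {c : C₀ ⟶ C₁} (h : IsMonoModulo N (g ≫ c)) : IsMonoModulo N g :=
  fun _ x hx => h x (by simpa using hx.comp c)

/-- If `x ≫ g` factors as `a ≫ b` through `M ∈ N`, the cocone `E` of `b ≫ h` is an extension of
`M` by `Z`, hence in `N`, and `x` is a map through `E` plus a map through `Z`. -/
lemma isMonoModulo_mor₂_of_obj₁_mem {N : Set C}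
    (hNext : ∀ T ∈ distTriang C, T.obj₁ ∈ N → T.obj₃ ∈ N → T.obj₂ ∈ N)
    {Z B C' : C} {v : Z ⟶ B} {g : B ⟶ C'} {h : C' ⟶ Z⟦(1:ℤ)⟧}
    (hT : Triangle.mk v g h ∈ distTriang C) (hZ : Z ∈ N) : IsMonoModulo N g := by
  rintro X x ⟨M, hM, a, b, hab⟩
  obtain ⟨E, f₂, g₂, hT₂⟩ := distinguished_cocone_triangle₂ (b ≫ h)
  obtain ⟨φ, -, hφg⟩ : ∃ φ : E ⟶ B, f₂ ≫ φ = 𝟙 Z ≫ v ∧ g₂ ≫ b = φ ≫ g :=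
    complete_distinguished_triangle_morphism₂ _ _ hT₂ hT (𝟙 Z) b
      (show (b ≫ h) ≫ (shiftFunctor C 1).map (𝟙 Z) = b ≫ h by simp)
  have hE : E ∈ N := hNext _ hT₂ hZ hM
  have hgh : g ≫ h = 0 := comp_distTriang_mor_zero₂₃ _ hT
  have ha : a ≫ b ≫ h = 0 := by
    rw [← Category.assoc, ← hab, Category.assoc, hgh, comp_zero]
  obtain ⟨e, rfl⟩ : ∃ e : X ⟶ E, a = e ≫ g₂ := Triangle.coyoneda_exact₃ _ hT₂ a ha
  have hdiff : (x - e ≫ φ) ≫ g = 0 := by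
    rw [Preadditive.sub_comp, hab, Category.assoc, Category.assoc, hφg, sub_self]
  obtain ⟨t, ht⟩ : ∃ t : X ⟶ Z, x - e ≫ φ = t ≫ v :=
    Triangle.coyoneda_exact₂ _ hT (x - e ≫ φ) hdiff
  rw [← add_sub_cancel (e ≫ φ) x, ht]
  exact .add hNext ⟨E, hE, e, φ, rfl⟩ ⟨Z, hZ, t, v, rfl⟩

theorem stmt4_general (N : Set C)
    (hN0 : ∀ X : C, Limits.IsZero X → X ∈ N)
    (hNext : ∀ (T : Triangle C), (T ∈ distTriang C) → T.obj₁ ∈ N → T.obj₃ ∈ N → T.obj₂ ∈ N)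
    {A B C₀ : C} (f : A ⟶ B) (g : B ⟶ C₀) (h : C₀ ⟶ A⟦(1:ℤ)⟧)
    (hT : Triangle.mk f g h ∈ distTriang C) :
    FactorsThru N f ↔
      ∀ ⦃X : C⦄ (x : X ⟶ B), FactorsThru N (x ≫ g) → FactorsThru N x := by
  have hfg : f ≫ g = 0 := comp_distTriang_mor_zero₁₂ _ hT
  refine ⟨?_, fun hg => hg f (hfg ▸ .zero hN0 A C₀)⟩
  rintro ⟨Z, hZ, u, v, hf⟩
  -- Complete `v` to a triangle; its second map factors through `g` since `u ≫ v ≫ g' = 0`.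
  obtain ⟨C', g', h', hT'⟩ := distinguished_cocone_triangle v
  have hvg' : v ≫ g' = 0 := comp_distTriang_mor_zero₁₂ _ hT'
  obtain ⟨c, rfl⟩ : ∃ c : C₀ ⟶ C', g' = g ≫ c :=
    Triangle.yoneda_exact₂ _ hT g' (show f ≫ g' = 0 by rw [hf, Category.assoc, hvg', comp_zero])
  exact (isMonoModulo_mor₂_of_obj₁_mem hNext hT' hZ).of_comp

theorem stmt4 (N : Set C)
    (hN0 : ∀ X : C, Limits.IsZero X → X ∈ N)
    (hNiso : ∀ ⦃X Y : C⦄, (X ≅ Y) → X ∈ N → Y ∈ N)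
    (hNsum : ∀ ⦃X Z : C⦄ (i : X ⟶ Z) (r : Z ⟶ X), i ≫ r = 𝟙 X → Z ∈ N → X ∈ N)
    (hNext : ∀ (T : Triangle C), (T ∈ distTriang C) → T.obj₁ ∈ N → T.obj₃ ∈ N → T.obj₂ ∈ N)
    {A B C₀ : C} (f : A ⟶ B) (g : B ⟶ C₀) (h : C₀ ⟶ A⟦(1:ℤ)⟧)
    (hT : Triangle.mk f g h ∈ distTriang C) :
    FactorsThru N f ↔
      ∀ ⦃X : C⦄ (x : X ⟶ B), FactorsThru N (x ≫ g) → FactorsThru N x :=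
  stmt4_general N hN0 hNext f g h hT
end

section
/- The class S_N satisfies the 2-out-of-3 property with respect to composition: for composable morphisms s: A ⟶ B and t: B ⟶ C, if any two of s, t, and t ∘ s belong to S_N, then so does the third. -/
/-!
Let `I` be the ideal of morphisms factoring through `N`; it is closed under sums because `N`
contains the biproduct of any two of its objects. The key fact is a cancellation property: in a
distinguished triangle `U ⟶ V ⟶ Z ⟶ U⟦1⟧` whose first map lies in `I`, a morphism into `V` lies
in `I` as soon as its composite with `V ⟶ Z` does, and dually for morphisms out of `V` when the
second map lies in `I`: such a morphism splits as the sum of a map through `N` and a map through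
an extension of two objects of `N`. Given this, each case of 2-out-of-3 is a diagram
chase: complete the missing morphism to a distinguished triangle and use exactness of the
(co)Yoneda sequences to bring its two other maps into the situation of the cancellation property.
-/

set_option linter.unusedSectionVars false

open CategoryTheory CategoryTheory.Limits CategoryTheory.Pretriangulated

universe v u v₂ u₂

variable {C : Type u} [Category.{v} C] [Preadditive C] [HasZeroObject C]
  [HasShift C ℤ] [∀ n : ℤ, (shiftFunctor C n).Additive] [Pretriangulated C]

lemma Triangle.yoneda_exact₁ (T : Triangle C) (hT : T ∈ distTriang C) {X : C}
    (f : T.obj₁ ⟶ X) (hf : T.mor₃ ≫ f⟦(1 : ℤ)⟧' = 0) :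
    ∃ g : T.obj₂ ⟶ X, f = T.mor₁ ≫ g :=
  Triangle.yoneda_exact₂ _ (inv_rot_of_distTriang _ hT) f <| by
    have hnat := (shiftFunctorCompIsoId C (1 : ℤ) (-1) (by simp)).hom.naturality f
    dsimp at hnat
    show (-T.mor₃⟦(-1 : ℤ)⟧' ≫ (shiftFunctorCompIsoId C 1 (-1) (by simp)).hom.app T.obj₁) ≫ f = 0
    rw [Preadditive.neg_comp, Category.assoc, ← hnat, ← Functor.map_comp_assoc, hf]
    simp

section

variable {N : Set C}

lemma FactorsThru.postcomp {X Y Z : C} {f : X ⟶ Y} (hf : FactorsThru N f) (g : Y ⟶ Z) :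
    FactorsThru N (f ≫ g) := by
  obtain ⟨P, hP, u, v, rfl⟩ := hf
  exact ⟨P, hP, u, v ≫ g, by simp⟩

lemma FactorsThru.precomp {X Y Z : C} {f : Y ⟶ Z} (hf : FactorsThru N f) (g : X ⟶ Y) :
    FactorsThru N (g ≫ f) := by
  obtain ⟨P, hP, u, v, rfl⟩ := hf
  exact ⟨P, hP, g ≫ u, v, by simp⟩

open ZeroObject in
lemma factorsThru_zero (hN0 : ∀ X : C, IsZero X → X ∈ N) {X Y : C} :
    FactorsThru N (0 : X ⟶ Y) :=
  ⟨0, hN0 _ (isZero_zero C), 0, 0, by simp⟩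

lemma FactorsThru.add_s13
    (hNext : ∀ T ∈ distTriang C, T.obj₁ ∈ N → T.obj₃ ∈ N → T.obj₂ ∈ N)
    {X Y : C} {f g : X ⟶ Y} (hf : FactorsThru N f) (hg : FactorsThru N g) :
    FactorsThru N (f + g) := by
  obtain ⟨P, hP, u, v, rfl⟩ := hf
  obtain ⟨Q, hQ, u', v', rfl⟩ := hg
  exact ⟨P ⊞ Q, hNext _ (binaryBiproductTriangle_distinguished P Q) hP hQ,
    biprod.lift u u', biprod.desc v v', by simp⟩

lemma factorsThru_of_comp_mor₂
    (hNext : ∀ T ∈ distTriang C, T.obj₁ ∈ N → T.obj₃ ∈ N → T.obj₂ ∈ N)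
    {T : Triangle C} (hT : T ∈ distTriang C) (h₁ : FactorsThru N T.mor₁)
    {X : C} {φ : X ⟶ T.obj₂} (hφ : FactorsThru N (φ ≫ T.mor₂)) : FactorsThru N φ := by
  obtain ⟨P, hP, a₁, a₂, ha⟩ := h₁
  obtain ⟨M, hM, c₁, c₂, hc⟩ := hφ
  obtain ⟨W, w, w', hW⟩ := distinguished_cocone_triangle a₂
  have hww' : w ≫ w' = 0 := comp_distTriang_mor_zero₂₃ _ hW
  have ha₂w : a₂ ≫ w = 0 := comp_distTriang_mor_zero₁₂ _ hW
  obtain ⟨ε, hε⟩ : ∃ ε, w = T.mor₂ ≫ ε := T.yoneda_exact₂ hT w <| by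
    rw [ha, Category.assoc, ha₂w, comp_zero]
  obtain ⟨E, u, v, hE⟩ := distinguished_cocone_triangle₂ (c₂ ≫ ε ≫ w')
  obtain ⟨ψ, hψ⟩ : ∃ ψ, c₁ = ψ ≫ v := Triangle.coyoneda_exact₃ _ hE c₁ <| by
    show c₁ ≫ c₂ ≫ ε ≫ w' = 0
    rw [← Category.assoc, ← hc, Category.assoc, ← Category.assoc T.mor₂, ← hε, hww', comp_zero]
  obtain ⟨Λ, hΛ⟩ : ∃ Λ, v ≫ c₂ ≫ ε = Λ ≫ w := Triangle.coyoneda_exact₃ _ hW _ <| by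
    have hvE : v ≫ c₂ ≫ ε ≫ w' = 0 := comp_distTriang_mor_zero₂₃ _ hE
    show (v ≫ c₂ ≫ ε) ≫ w' = 0
    simpa using hvE
  obtain ⟨τ, hτ⟩ : ∃ τ, φ - ψ ≫ Λ = τ ≫ a₂ := Triangle.coyoneda_exact₂ _ hW _ <| by
    have hφw : φ ≫ w = c₁ ≫ c₂ ≫ ε := by rw [hε, ← Category.assoc, hc, Category.assoc]
    have hψΛw : (ψ ≫ Λ) ≫ w = c₁ ≫ c₂ ≫ ε := by
      rw [Category.assoc, ← hΛ, ← Category.assoc, ← hψ]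
    show (φ - ψ ≫ Λ) ≫ w = 0
    rw [Preadditive.sub_comp, hφw, hψΛw, sub_self]
  rw [eq_add_of_sub_eq hτ]
  exact FactorsThru.add_s13 hNext ⟨P, hP, τ, a₂, rfl⟩ ⟨E, hNext _ hE hP hM, ψ, Λ, rfl⟩

lemma factorsThru_of_mor₁_comp
    (hNext : ∀ T ∈ distTriang C, T.obj₁ ∈ N → T.obj₃ ∈ N → T.obj₂ ∈ N)
    {T : Triangle C} (hT : T ∈ distTriang C) (h₂ : FactorsThru N T.mor₂)
    {X : C} {φ : T.obj₂ ⟶ X} (hφ : FactorsThru N (T.mor₁ ≫ φ)) : FactorsThru N φ := by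
  obtain ⟨P, hP, b₁, b₂, hb⟩ := h₂
  obtain ⟨M, hM, c₁, c₂, hc⟩ := hφ
  obtain ⟨W, w, w', hW⟩ := distinguished_cocone_triangle₁ b₁
  have hw'w : w' ≫ w⟦(1 : ℤ)⟧' = 0 := comp_distTriang_mor_zero₃₁ _ hW
  have hwb₁ : w ≫ b₁ = 0 := comp_distTriang_mor_zero₁₂ _ hW
  obtain ⟨ε, hε⟩ : ∃ ε, w = ε ≫ T.mor₁ := T.coyoneda_exact₂ hT w <| by
    rw [hb, ← Category.assoc, hwb₁, zero_comp]
  obtain ⟨E, u, v, hE⟩ := distinguished_cocone_triangle₂ (w' ≫ (ε ≫ c₁)⟦(1 : ℤ)⟧')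
  obtain ⟨σ, hσ⟩ : ∃ σ, c₂ = u ≫ σ := Triangle.yoneda_exact₁ _ hE c₂ <| by
    show (w' ≫ (ε ≫ c₁)⟦(1 : ℤ)⟧') ≫ c₂⟦(1 : ℤ)⟧' = 0
    rw [Category.assoc, ← Functor.map_comp, Category.assoc, ← hc, ← Category.assoc, ← hε,
      Functor.map_comp, ← Category.assoc, hw'w, zero_comp]
  obtain ⟨Λ, hΛ⟩ : ∃ Λ, ε ≫ c₁ ≫ u = w ≫ Λ := Triangle.yoneda_exact₁ _ hW _ <| by
    have hEu : (w' ≫ (ε ≫ c₁)⟦(1 : ℤ)⟧') ≫ u⟦(1 : ℤ)⟧' = 0 := comp_distTriang_mor_zero₃₁ _ hE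
    show w' ≫ (ε ≫ c₁ ≫ u)⟦(1 : ℤ)⟧' = 0
    simpa using hEu
  obtain ⟨τ, hτ⟩ : ∃ τ, φ - Λ ≫ σ = b₁ ≫ τ := Triangle.yoneda_exact₂ _ hW _ <| by
    have hwφ : w ≫ φ = ε ≫ c₁ ≫ c₂ := by rw [hε, Category.assoc, hc]
    have hwΛσ : w ≫ Λ ≫ σ = ε ≫ c₁ ≫ c₂ := by
      rw [← Category.assoc, ← hΛ, hσ]
      simp only [Category.assoc]
    show w ≫ (φ - Λ ≫ σ) = 0
    rw [Preadditive.comp_sub, hwφ, hwΛσ, sub_self]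
  rw [eq_add_of_sub_eq hτ]
  exact FactorsThru.add_s13 hNext ⟨P, hP, b₁, τ, rfl⟩ ⟨E, hNext _ hE hM hP, Λ, σ, rfl⟩

variable {A B C₀ : C} {s : A ⟶ B} {t : B ⟶ C₀}

lemma SN.comp
    (hNext : ∀ T ∈ distTriang C, T.obj₁ ∈ N → T.obj₃ ∈ N → T.obj₂ ∈ N)
    (hs : SN N s) (ht : SN N t) : SN N (s ≫ t) := by
  obtain ⟨X, x, x', hTs, hx, hx'⟩ := hs
  obtain ⟨Y, y, y', hTt, hy, hy'⟩ := ht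
  obtain ⟨W, w, w', hW⟩ := distinguished_cocone_triangle₁ (s ≫ t)
  have hwst : w ≫ s ≫ t = 0 := comp_distTriang_mor_zero₁₂ _ hW
  have hstw' : (s ≫ t) ≫ w' = 0 := comp_distTriang_mor_zero₂₃ _ hW
  obtain ⟨ψ, hψ⟩ : ∃ ψ, w ≫ s = ψ ≫ y :=
    Triangle.coyoneda_exact₂ _ hTt (w ≫ s) <| by
      show (w ≫ s) ≫ t = 0
      rw [Category.assoc, hwst]
  obtain ⟨ψ', hψ'⟩ : ∃ ψ', t ≫ w' = x' ≫ ψ' :=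
    Triangle.yoneda_exact₂ _ (rot_of_distTriang _ hTs) (t ≫ w') <| by
      show s ≫ t ≫ w' = 0
      rw [← Category.assoc, hstw']
  refine ⟨W, w, w', hW, factorsThru_of_comp_mor₂ hNext hTs hx ?_,
    factorsThru_of_mor₁_comp hNext (rot_of_distTriang _ hTt) hy' ?_⟩
  · show FactorsThru N (w ≫ s)
    exact hψ ▸ hy.precomp ψ
  · show FactorsThru N (t ≫ w')
    exact hψ' ▸ hx'.postcomp ψ'

lemma SN.of_precomp (hN0 : ∀ X : C, IsZero X → X ∈ N)
    (hNext : ∀ T ∈ distTriang C, T.obj₁ ∈ N → T.obj₃ ∈ N → T.obj₂ ∈ N)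
    (hs : SN N s) (hst : SN N (s ≫ t)) : SN N t := by
  obtain ⟨X, x, x', hTs, -, P, hP, x₁, x₂, hx'⟩ := hs
  obtain ⟨W, w, w', hW, hw, hw'⟩ := hst
  obtain ⟨Y, y, y', hTt⟩ := distinguished_cocone_triangle₁ t
  have hyt : y ≫ t = 0 := comp_distTriang_mor_zero₁₂ _ hTt
  have hty' : t ≫ y' = 0 := comp_distTriang_mor_zero₂₃ _ hTt
  have hy' : FactorsThru N y' :=
    factorsThru_of_mor₁_comp hNext (rot_of_distTriang _ hW) hw' <| by
      show FactorsThru N ((s ≫ t) ≫ y')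
      rw [Category.assoc, hty', comp_zero]
      exact factorsThru_zero hN0
  -- `y` is detected on the fibre `G` of `y ≫ x₁ : Y ⟶ P`, where it factors through `w`.
  obtain ⟨G, g, g', hG⟩ := distinguished_cocone_triangle₁ (y ≫ x₁)
  have hgyx₁ : g ≫ y ≫ x₁ = 0 := comp_distTriang_mor_zero₁₂ _ hG
  obtain ⟨η, hη⟩ : ∃ η, g ≫ y = η ≫ s :=
    Triangle.coyoneda_exact₂ _ (rot_of_distTriang _ hTs) (g ≫ y) <| by
      show (g ≫ y) ≫ x' = 0
      rw [hx', Category.assoc, reassoc_of% hgyx₁, zero_comp]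
  obtain ⟨θ, hθ⟩ : ∃ θ, η = θ ≫ w := Triangle.coyoneda_exact₂ _ hW η <| by
    show η ≫ s ≫ t = 0
    rw [← Category.assoc, ← hη, Category.assoc, hyt, comp_zero]
  have hy : FactorsThru N y :=
    factorsThru_of_mor₁_comp hNext hG ⟨P, hP, y ≫ x₁, 𝟙 P, (Category.comp_id _).symm⟩ <| by
      show FactorsThru N (g ≫ y)
      rw [hη, hθ, Category.assoc]
      exact (hw.postcomp s).precomp θ
  exact ⟨Y, y, y', hTt, hy, hy'⟩

lemma SN.of_postcomp (hN0 : ∀ X : C, IsZero X → X ∈ N)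
    (hNext : ∀ T ∈ distTriang C, T.obj₁ ∈ N → T.obj₃ ∈ N → T.obj₂ ∈ N)
    (ht : SN N t) (hst : SN N (s ≫ t)) : SN N s := by
  obtain ⟨Y, y, y', hTt, hy, -⟩ := ht
  obtain ⟨W, w, w', hW, hw, P, hP, w₁, w₂, hw'⟩ := hst
  obtain ⟨X, x, x', hTs⟩ := distinguished_cocone_triangle₁ s
  have hxs : x ≫ s = 0 := comp_distTriang_mor_zero₁₂ _ hTs
  have hsx' : s ≫ x' = 0 := comp_distTriang_mor_zero₂₃ _ hTs
  have hx : FactorsThru N x := factorsThru_of_comp_mor₂ hNext hW hw <| by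
    show FactorsThru N (x ≫ s ≫ t)
    rw [reassoc_of% hxs, zero_comp]
    exact factorsThru_zero hN0
  -- `x'` is detected on the fibre `U` of `t ≫ w₁ : B ⟶ P`, where it factors through `y ≫ x'`.
  obtain ⟨U, u, u', hU⟩ := distinguished_cocone_triangle₁ (t ≫ w₁)
  have hutw₁ : u ≫ t ≫ w₁ = 0 := comp_distTriang_mor_zero₁₂ _ hU
  obtain ⟨η, hη⟩ : ∃ η, u ≫ t = η ≫ s ≫ t :=
    Triangle.coyoneda_exact₂ _ (rot_of_distTriang _ hW) (u ≫ t) <| by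
      show (u ≫ t) ≫ w' = 0
      rw [hw', Category.assoc, reassoc_of% hutw₁, zero_comp]
  obtain ⟨ρ, hρ⟩ : ∃ ρ, u - η ≫ s = ρ ≫ y := Triangle.coyoneda_exact₂ _ hTt _ <| by
    show (u - η ≫ s) ≫ t = 0
    rw [Preadditive.sub_comp, Category.assoc, hη, sub_self]
  have hx' : FactorsThru N x' :=
    factorsThru_of_mor₁_comp hNext hU ⟨P, hP, t ≫ w₁, 𝟙 P, (Category.comp_id _).symm⟩ <| by
      have hux' : u ≫ x' = ρ ≫ y ≫ x' := by
        rw [← Category.assoc, ← hρ, Preadditive.sub_comp, Category.assoc, hsx', comp_zero,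
          sub_zero]
      show FactorsThru N (u ≫ x')
      rw [hux']
      exact (hy.postcomp x').precomp ρ
  exact ⟨X, x, x', hTs, hx, hx'⟩

lemma SNProp.hasTwoOutOfThreeProperty (hN0 : ∀ X : C, IsZero X → X ∈ N)
    (hNext : ∀ T ∈ distTriang C, T.obj₁ ∈ N → T.obj₃ ∈ N → T.obj₂ ∈ N) :
    (SNProp N).HasTwoOutOfThreeProperty where
  comp_mem _ _ := SN.comp hNext
  of_postcomp _ _ := SN.of_postcomp hN0 hNext
  of_precomp _ _ := SN.of_precomp hN0 hNext

end

theorem stmt13_general (N : Set C)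
    (hN0 : ∀ X : C, Limits.IsZero X → X ∈ N)
    (hNext : ∀ (T : Triangle C), (T ∈ distTriang C) → T.obj₁ ∈ N → T.obj₃ ∈ N → T.obj₂ ∈ N)
    {A B C₀ : C} (s : A ⟶ B) (t : B ⟶ C₀) :
    (SN N s → SN N t → SN N (s ≫ t)) ∧
    (SN N s → SN N (s ≫ t) → SN N t) ∧
    (SN N t → SN N (s ≫ t) → SN N s) := by
  have := SNProp.hasTwoOutOfThreeProperty hN0 hNext
  exact ⟨(SNProp N).comp_mem s t, (SNProp N).of_precomp (W' := SNProp N) s t,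
    (SNProp N).of_postcomp (W' := SNProp N) s t⟩

theorem stmt13 (N : Set C)
    (hN0 : ∀ X : C, Limits.IsZero X → X ∈ N)
    (hNiso : ∀ ⦃X Y : C⦄, (X ≅ Y) → X ∈ N → Y ∈ N)
    (hNsum : ∀ ⦃X Z : C⦄ (i : X ⟶ Z) (r : Z ⟶ X), i ≫ r = 𝟙 X → Z ∈ N → X ∈ N)
    (hNext : ∀ (T : Triangle C), (T ∈ distTriang C) → T.obj₁ ∈ N → T.obj₃ ∈ N → T.obj₂ ∈ N)
    {A B C₀ : C} (s : A ⟶ B) (t : B ⟶ C₀) :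
    (SN N s → SN N t → SN N (s ≫ t)) ∧
    (SN N s → SN N (s ≫ t) → SN N t) ∧
    (SN N t → SN N (s ≫ t) → SN N s) :=
  stmt13_general N hN0 hNext s t
end
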